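/- Let H₁, …, H_p be finite-dimensional complex Hilbert spaces and let H = H₁ ⊗ ⋯ ⊗ H_p carry the induced inner product. Call a set S of unit vectors in H stochastically invariant (SI) if for every φ ∈ S and all linear operators A₁, …, A_p (each Aᵢ acting on Hᵢ) with (A₁ ⊗ ⋯ ⊗ A_p)φ ≠ 0, the normalized vector (A₁ ⊗ ⋯ ⊗ A_p)φ / ‖(A₁ ⊗ ⋯ ⊗ A_p)φ‖ also belongs to S. Define E(χ,S) = 1 − sup_{φ∈S} |⟨χ, φ⟩|² for unit vectors χ. Then for every nonempty SI set S, every unit vector ψ in H, and every finite family of operators M₁, …, M_m on H₁ satisfying Σⱼ Mⱼ† Mⱼ = 1 (the identity on H₁), setting pⱼ = ‖(Mⱼ ⊗ 1 ⊗ ⋯ ⊗ 1)ψ‖² and ψⱼ = (Mⱼ ⊗ 1 ⊗ ⋯ ⊗ 1)ψ / √pⱼ whenever pⱼ ≠ 0, one has E(ψ,S) ≥ Σ_{j : pⱼ ≠ 0} pⱼ E(ψⱼ,S). In other words, E(·,S) does not increase on average under a local measurement performed by one party, so E(·,S) is an entanglement monotone. -/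

import Mathlib

/-!
For a unit vector `φ ∈ S`, completeness of the measurement splits the overlap as
`⟪ψ, φ⟫ = ∑ⱼ ⟪Mⱼψ, Mⱼφ⟫`, where `Mⱼ` abbreviates `Mⱼ ⊗ 1 ⊗ ⋯ ⊗ 1`. Stochastic
invariance puts the normalized `Mⱼφ` back in `S`, so
`|⟪Mⱼψ, Mⱼφ⟫| ≤ ‖Mⱼψ‖ ‖Mⱼφ‖ √(sup_S |⟪ψⱼ, ·⟫|²)`. Cauchy–Schwarz over `j`, together with
`∑ⱼ ‖Mⱼφ‖² = ‖φ‖² = 1`, gives `sup_S |⟪ψ, ·⟫|² ≤ ∑ⱼ pⱼ sup_S |⟪ψⱼ, ·⟫|²`, and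
`∑ⱼ pⱼ = 1` turns this into the claimed inequality.
-/

open scoped InnerProductSpace Matrix

/-- The matrix of a local operator `A₁ ⊗ ⋯ ⊗ A_p` on the `p`-partite Hilbert space
`H = H₁ ⊗ ⋯ ⊗ H_p`, modelled concretely as `EuclideanSpace ℂ (Π i, ι i)` where `ι i`
indexes an orthonormal basis of the `i`-th particle's space. -/
noncomputable def localOperator {p : ℕ} {ι : Fin p → Type*} [∀ i, Fintype (ι i)]
    (A : ∀ i, Matrix (ι i) (ι i) ℂ) : Matrix (∀ i, ι i) (∀ i, ι i) ℂ :=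
  fun x y => ∏ i, A i (x i) (y i)

/-- The action of the local operator `A₁ ⊗ ⋯ ⊗ A_p` on a state of the multipartite
Hilbert space. -/
noncomputable def applyLocal {p : ℕ} {ι : Fin p → Type*} [∀ i, Fintype (ι i)]
    (A : ∀ i, Matrix (ι i) (ι i) ℂ) (ψ : EuclideanSpace ℂ (∀ i, ι i)) :
    EuclideanSpace ℂ (∀ i, ι i) :=
  (WithLp.equiv 2 _).symm ((localOperator A).mulVec ((WithLp.equiv 2 _) ψ))

/-- The action of the local operator `M ⊗ 1 ⊗ ⋯ ⊗ 1`, corresponding to an operator `M`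
applied by the first party alone. -/
noncomputable def applyFirstParty {p : ℕ} {ι : Fin (p + 1) → Type*}
    [∀ i, Fintype (ι i)] [∀ i, DecidableEq (ι i)] (M : Matrix (ι 0) (ι 0) ℂ)
    (ψ : EuclideanSpace ℂ (∀ i, ι i)) : EuclideanSpace ℂ (∀ i, ι i) :=
  applyLocal (Function.update (fun i => (1 : Matrix (ι i) (ι i) ℂ)) 0 M) ψ

section LocalOperator

variable {q : ℕ} {ι : Fin q → Type*} [∀ i, Fintype (ι i)]

lemma localOperator_mul (A B : ∀ i, Matrix (ι i) (ι i) ℂ) :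
    localOperator A * localOperator B = localOperator (fun i => A i * B i) := by
  ext x y
  simp only [Matrix.mul_apply, localOperator, Fintype.prod_sum, Finset.prod_mul_distrib]

lemma localOperator_conjTranspose (A : ∀ i, Matrix (ι i) (ι i) ℂ) :
    (localOperator A)ᴴ = localOperator (fun i => (A i)ᴴ) := by
  ext x y
  simp [localOperator, Matrix.conjTranspose_apply, star_prod]

lemma localOperator_update_apply (A : ∀ i, Matrix (ι i) (ι i) ℂ) (k : Fin q)
    (B : Matrix (ι k) (ι k) ℂ) (x y : ∀ i, ι i) :
    localOperator (Function.update A k B) x y =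
      B (x k) (y k) * ∏ i ∈ Finset.univ.erase k, A i (x i) (y i) := by
  rw [localOperator, ← Finset.mul_prod_erase _ _ (Finset.mem_univ k), Function.update_self]
  congr 1
  exact Finset.prod_congr rfl fun i hi => by rw [Function.update_of_ne (Finset.ne_of_mem_erase hi)]

lemma sum_localOperator_update {κ : Type*} [Fintype κ] (A : ∀ i, Matrix (ι i) (ι i) ℂ)
    (k : Fin q) (B : κ → Matrix (ι k) (ι k) ℂ) :
    ∑ j, localOperator (Function.update A k (B j)) =
      localOperator (Function.update A k (∑ j, B j)) := by
  ext x y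
  simp only [Matrix.sum_apply, localOperator_update_apply, Finset.sum_mul]

variable [∀ i, DecidableEq (ι i)]

lemma localOperator_one : localOperator (fun i => (1 : Matrix (ι i) (ι i) ℂ)) = 1 := by
  ext x y
  by_cases h : x = y
  · subst h
    simp [localOperator]
  · obtain ⟨i, hi⟩ := Function.ne_iff.mp h
    rw [Matrix.one_apply_ne h]
    exact Finset.prod_eq_zero (Finset.mem_univ i) (Matrix.one_apply_ne hi)

lemma sum_conjTranspose_mul_localOperator_update {κ : Type*} [Fintype κ] (k : Fin q)
    (M : κ → Matrix (ι k) (ι k) ℂ) (hM : ∑ j, (M j)ᴴ * M j = 1) :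
    ∑ j, (localOperator (Function.update (fun _ => 1) k (M j)))ᴴ *
        localOperator (Function.update (fun _ => 1) k (M j)) = 1 := by
  have hterm : ∀ j, (localOperator (Function.update (fun _ => 1) k (M j)))ᴴ *
      localOperator (Function.update (fun _ => 1) k (M j)) =
        localOperator (Function.update (fun i => (1 : Matrix (ι i) (ι i) ℂ)) k
          ((M j)ᴴ * M j)) := by
    intro j
    rw [localOperator_conjTranspose, localOperator_mul]
    congr 1
    funext i
    rw [Function.apply_update₂ (fun i (C D : Matrix (ι i) (ι i) ℂ) => Cᴴ * D)]
    simp only [Matrix.conjTranspose_one, mul_one]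
  simp only [hterm, sum_localOperator_update, hM, Function.update_eq_self_iff.mpr rfl,
    localOperator_one]

end LocalOperator

lemma applyLocal_eq_toEuclideanCLM {q : ℕ} {ι : Fin q → Type*} [∀ i, Fintype (ι i)]
    [∀ i, DecidableEq (ι i)] (A : ∀ i, Matrix (ι i) (ι i) ℂ)
    (ψ : EuclideanSpace ℂ (∀ i, ι i)) :
    applyLocal A ψ = Matrix.toEuclideanCLM (𝕜 := ℂ) (localOperator A) ψ :=
  rfl

section Overlap

variable {𝕜 E : Type*} [RCLike 𝕜] [NormedAddCommGroup E] [InnerProductSpace 𝕜 E]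

lemma sum_inner_apply_eq_inner [CompleteSpace E] {κ : Type*} [Fintype κ] (T : κ → E →L[𝕜] E)
    (hT : ∑ j, star (T j) * T j = 1) (χ η : E) :
    ∑ j, ⟪T j χ, T j η⟫_𝕜 = ⟪χ, η⟫_𝕜 := by
  calc ∑ j, ⟪T j χ, T j η⟫_𝕜 = ∑ j, ⟪χ, (star (T j) * T j) η⟫_𝕜 := by
        simp only [ContinuousLinearMap.star_eq_adjoint, mul_apply_eq_comp,
          ContinuousLinearMap.adjoint_inner_right]
    _ = ⟪χ, η⟫_𝕜 := by
        rw [← inner_sum, ← sum_apply, hT, one_apply_eq_self]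

lemma sum_norm_sq_eq_of_sum_inner_eq {κ : Type*} [Fintype κ] {T : κ → E → E}
    (hT : ∀ χ η, ∑ j, ⟪T j χ, T j η⟫_𝕜 = ⟪χ, η⟫_𝕜) (χ : E) :
    ∑ j, ‖T j χ‖ ^ 2 = ‖χ‖ ^ 2 := by
  have h := hT χ χ
  simp only [inner_self_eq_norm_sq_to_K] at h
  exact_mod_cast h

variable (𝕜) in
/-- The geometric measure is `E(χ, S) = 1 - maxOverlap 𝕜 S χ`. -/
noncomputable def maxOverlap (S : Set E) (χ : E) : ℝ :=
  ⨆ φ : S, ‖⟪χ, (φ : E)⟫_𝕜‖ ^ 2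

variable {S : Set E}

lemma maxOverlap_nonneg (χ : E) : 0 ≤ maxOverlap 𝕜 S χ :=
  Real.iSup_nonneg fun _ => by positivity

lemma norm_inner_le_sqrt_maxOverlap (hS : ∀ φ ∈ S, ‖φ‖ ≤ 1) (χ : E) {φ : E} (hφ : φ ∈ S) :
    ‖⟪χ, φ⟫_𝕜‖ ≤ √(maxOverlap 𝕜 S χ) := by
  have hbdd : BddAbove (Set.range fun φ : S => ‖⟪χ, (φ : E)⟫_𝕜‖ ^ 2) := by
    refine ⟨‖χ‖ ^ 2, ?_⟩
    rintro _ ⟨φ, rfl⟩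
    dsimp only
    gcongr
    exact (norm_inner_le_norm χ φ).trans (mul_le_of_le_one_right (norm_nonneg χ) (hS φ φ.2))
  exact Real.le_sqrt_of_sq_le (le_ciSup hbdd ⟨φ, hφ⟩)

variable [Module ℝ E] [IsScalarTower ℝ 𝕜 E]

lemma norm_inner_smul_smul (r s : ℝ) (u v : E) :
    ‖⟪r • u, s • v⟫_𝕜‖ = |r| * |s| * ‖⟪u, v⟫_𝕜‖ := by
  simp only [RCLike.real_smul_eq_coe_smul (K := 𝕜), inner_smul_left, inner_smul_right,
    norm_mul, RCLike.norm_conj, RCLike.norm_ofReal]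
  ring

lemma norm_inner_le_mul_sqrt_maxOverlap (hS : ∀ φ ∈ S, ‖φ‖ ≤ 1) (u v : E)
    (hv : v ≠ 0 → ‖v‖⁻¹ • v ∈ S) :
    ‖⟪u, v⟫_𝕜‖ ≤ ‖u‖ * √(maxOverlap 𝕜 S (‖u‖⁻¹ • u)) * ‖v‖ := by
  rcases eq_or_ne u 0 with rfl | hu
  · simp
  rcases eq_or_ne v 0 with rfl | hv0
  · simp
  calc ‖⟪u, v⟫_𝕜‖ = ‖u‖ * ‖⟪‖u‖⁻¹ • u, ‖v‖⁻¹ • v⟫_𝕜‖ * ‖v‖ := by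
        rw [norm_inner_smul_smul, abs_inv, abs_inv, abs_norm, abs_norm]
        field_simp
    _ ≤ ‖u‖ * √(maxOverlap 𝕜 S (‖u‖⁻¹ • u)) * ‖v‖ := by
        gcongr
        exact norm_inner_le_sqrt_maxOverlap hS _ (hv hv0)

theorem maxOverlap_le_sum {κ : Type*} [Fintype κ] (hS : ∀ φ ∈ S, ‖φ‖ ≤ 1) {T : κ → E → E}
    (hT : ∀ χ η, ∑ j, ⟪T j χ, T j η⟫_𝕜 = ⟪χ, η⟫_𝕜)
    (hST : ∀ φ ∈ S, ∀ j, T j φ ≠ 0 → ‖T j φ‖⁻¹ • T j φ ∈ S) (ψ : E) :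
    maxOverlap 𝕜 S ψ ≤ ∑ j, ‖T j ψ‖ ^ 2 * maxOverlap 𝕜 S (‖T j ψ‖⁻¹ • T j ψ) := by
  refine Real.iSup_le (fun ⟨φ, hφ⟩ => ?_)
    (Finset.sum_nonneg fun j _ => mul_nonneg (sq_nonneg _) (maxOverlap_nonneg _))
  set a : κ → ℝ := fun j => ‖T j ψ‖ * √(maxOverlap 𝕜 S (‖T j ψ‖⁻¹ • T j ψ))
  have hφ_norm : ∑ j, ‖T j φ‖ ^ 2 ≤ 1 := by
    rw [sum_norm_sq_eq_of_sum_inner_eq hT]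
    exact pow_le_one₀ (norm_nonneg φ) (hS φ hφ)
  calc ‖⟪ψ, φ⟫_𝕜‖ ^ 2 = ‖∑ j, ⟪T j ψ, T j φ⟫_𝕜‖ ^ 2 := by rw [hT]
    _ ≤ (∑ j, a j * ‖T j φ‖) ^ 2 := by
        gcongr
        exact (norm_sum_le _ _).trans (Finset.sum_le_sum fun j _ =>
          norm_inner_le_mul_sqrt_maxOverlap hS _ _ (hST φ hφ j))
    _ ≤ (∑ j, a j ^ 2) * ∑ j, ‖T j φ‖ ^ 2 := Finset.sum_mul_sq_le_sq_mul_sq _ _ _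
    _ ≤ ∑ j, a j ^ 2 :=
        mul_le_of_le_one_right (Finset.sum_nonneg fun j _ => sq_nonneg _) hφ_norm
    _ = ∑ j, ‖T j ψ‖ ^ 2 * maxOverlap 𝕜 S (‖T j ψ‖⁻¹ • T j ψ) := by
        simp only [a, mul_pow, Real.sq_sqrt (maxOverlap_nonneg _)]

end Overlap

lemma sum_inner_applyFirstParty {p m : ℕ} {ι : Fin (p + 1) → Type*} [∀ i, Fintype (ι i)]
    [∀ i, DecidableEq (ι i)] {M : Fin m → Matrix (ι 0) (ι 0) ℂ} (hM : ∑ j, (M j)ᴴ * M j = 1)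
    (χ η : EuclideanSpace ℂ (∀ i, ι i)) :
    ∑ j, ⟪applyFirstParty (M j) χ, applyFirstParty (M j) η⟫_ℂ = ⟪χ, η⟫_ℂ := by
  simp only [applyFirstParty, applyLocal_eq_toEuclideanCLM]
  refine sum_inner_apply_eq_inner _ ?_ χ η
  simp only [← map_star, ← map_mul, ← map_sum, Matrix.star_eq_conjTranspose,
    sum_conjTranspose_mul_localOperator_update 0 M hM, map_one]

theorem geometric_measure_is_entanglement_monotone
    {p m : ℕ} {ι : Fin (p + 1) → Type*} [∀ i, Fintype (ι i)] [∀ i, DecidableEq (ι i)]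
    (S : Set (EuclideanSpace ℂ (∀ i, ι i)))
    (hunit : ∀ φ ∈ S, ‖φ‖ = 1)
    (hSI : ∀ φ ∈ S, ∀ A : ∀ i, Matrix (ι i) (ι i) ℂ,
      applyLocal A φ ≠ 0 → (‖applyLocal A φ‖⁻¹ • applyLocal A φ) ∈ S)
    (ψ : EuclideanSpace ℂ (∀ i, ι i)) (hψ : ‖ψ‖ = 1)
    (M : Fin m → Matrix (ι 0) (ι 0) ℂ)
    (hM : ∑ j, (M j)ᴴ * M j = 1) :
    (1 - ⨆ φ : S, ‖⟪ψ, (φ : EuclideanSpace ℂ (∀ i, ι i))⟫_ℂ‖ ^ 2) ≥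
      ∑ j ∈ Finset.univ.filter (fun j => ‖applyFirstParty (M j) ψ‖ ^ 2 ≠ 0),
        ‖applyFirstParty (M j) ψ‖ ^ 2 *
          (1 - ⨆ φ : S,
            ‖⟪(Real.sqrt (‖applyFirstParty (M j) ψ‖ ^ 2))⁻¹ • applyFirstParty (M j) ψ,
              (φ : EuclideanSpace ℂ (∀ i, ι i))⟫_ℂ‖ ^ 2) := by
  have hT := sum_inner_applyFirstParty hM (ι := ι)
  have hkey := maxOverlap_le_sum (fun φ hφ => (hunit φ hφ).le) hT (fun φ hφ _ => hSI φ hφ _) ψ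
  have hprob : ∑ j, ‖applyFirstParty (M j) ψ‖ ^ 2 = 1 := by
    rw [sum_norm_sq_eq_of_sum_inner_eq hT, hψ, one_pow]
  unfold maxOverlap at hkey
  simp only [Real.sqrt_sq (norm_nonneg _)]
  rw [Finset.sum_filter_of_ne fun _ _ h => left_ne_zero_of_mul h]
  simp only [mul_sub, mul_one, Finset.sum_sub_distrib, hprob]
  linarith
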